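/- arXiv:1607.07896 — 5 statements merged into one kernel-verified Lean document; each statement's English description precedes it below -/
import Mathlib

section
/- Consider a vehicle with dynamics ẍ = u, |u| ≤ a_m, 0 ≤ ẋ ≤ v_m, initial position x(0) = 0, initial velocity ẋ(0) = v₀ ∈ [0, v_m], which must reach position d with ẋ(t_f) = v_m. If d < (v₀² + v_m²)/(2a_m), then every feasible trajectory has terminal time t_f < 2v_m/a_m. -/
/-!
Suppose `t_f ≥ 2 v_m / a_m`. Since `|ẍ| ≤ a_m`, the speed stays above the braking ramp
`v₀ - a_m t` for the first `v₀ / a_m` time units and above the accelerating ramp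
`v_m - a_m (t_f - t)` for the last `v_m / a_m` ones; these windows do not overlap, and in between
the speed is nonnegative. Comparing positions with the two parabolas, the vehicle covers at least
`(v₀² + v_m²) / (2 a_m) > d`.
-/

open Set NNReal

theorem sub_le_sub_of_hasDerivAt_le {f g f' g' : ℝ → ℝ} {s t : ℝ} (hst : s ≤ t)
    (hf : ∀ u ∈ Icc s t, HasDerivAt f (f' u) u) (hg : ∀ u ∈ Icc s t, HasDerivAt g (g' u) u)
    (hle : ∀ u ∈ Icc s t, g' u ≤ f' u) :
    g t - g s ≤ f t - f s := by
  have hmono : MonotoneOn (fun u => f u - g u) (Icc s t) := by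
    refine monotoneOn_of_hasDerivWithinAt_nonneg (convex_Icc s t)
      (fun u hu => ((hf u hu).continuousAt.sub (hg u hu).continuousAt).continuousWithinAt)
      (fun u hu => ?_) (fun u hu => sub_nonneg.2 (hle u (interior_subset hu)))
    exact ((hf u (interior_subset hu)).sub (hg u (interior_subset hu))).hasDerivWithinAt
  linarith [hmono (left_mem_Icc.2 hst) (right_mem_Icc.2 hst) hst]

section Lipschitz

variable {x v : ℝ → ℝ} {K : ℝ≥0} {s t : ℝ}

theorem mul_sub_sq_le_sub_of_lipschitzOnWith_left (hst : s ≤ t)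
    (hx : ∀ u ∈ Icc s t, HasDerivAt x (v u) u) (hv : LipschitzOnWith K v (Icc s t)) :
    v s * (t - s) - K * (t - s) ^ 2 / 2 ≤ x t - x s := by
  have hramp : ∀ u ∈ Icc s t, v s - K * (u - s) ≤ v u := fun u hu => by
    have h := hv.dist_le_mul s (left_mem_Icc.2 hst) u hu
    rw [Real.dist_eq, Real.dist_eq, abs_sub_comm s, abs_of_nonneg (sub_nonneg.2 hu.1)] at h
    linarith [le_abs_self (v s - v u)]
  have hparabola : ∀ u ∈ Icc s t, HasDerivAt (fun u => v s * (u - s) - K * (u - s) ^ 2 / 2)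
      (v s - K * (u - s)) u := fun u _ =>
    (((hasDerivAt_id u).sub_const s).const_mul (v s) |>.sub
      ((((hasDerivAt_id u).sub_const s).pow 2).const_mul (K : ℝ) |>.div_const 2)).congr_deriv
      (by simp; ring)
  linear_combination sub_le_sub_of_hasDerivAt_le hst hx hparabola hramp

theorem mul_sub_sq_le_sub_of_lipschitzOnWith_right (hst : s ≤ t)
    (hx : ∀ u ∈ Icc s t, HasDerivAt x (v u) u) (hv : LipschitzOnWith K v (Icc s t)) :
    v t * (t - s) - K * (t - s) ^ 2 / 2 ≤ x t - x s := by
  have hramp : ∀ u ∈ Icc s t, v t - K * (t - u) ≤ v u := fun u hu => by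
    have h := hv.dist_le_mul t (right_mem_Icc.2 hst) u hu
    rw [Real.dist_eq, Real.dist_eq, abs_of_nonneg (sub_nonneg.2 hu.2)] at h
    linarith [le_abs_self (v t - v u)]
  have hparabola : ∀ u ∈ Icc s t, HasDerivAt (fun u => v t * (u - t) + K * (t - u) ^ 2 / 2)
      (v t - K * (t - u)) u := fun u _ =>
    (((hasDerivAt_id u).sub_const t).const_mul (v t) |>.add
      ((((hasDerivAt_id u).const_sub t).pow 2).const_mul (K : ℝ) |>.div_const 2)).congr_deriv
      (by simp; ring)
  linear_combination sub_le_sub_of_hasDerivAt_le hst hx hparabola hramp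

theorem sq_add_sq_div_le_sub_of_lipschitzOnWith (hK : 0 < K) (hst : s ≤ t)
    (hx : ∀ u ∈ Icc s t, HasDerivAt x (v u) u) (hv : LipschitzOnWith K v (Icc s t))
    (hv_nonneg : ∀ u ∈ Icc s t, 0 ≤ v u) (hlong : (v s + v t) / K ≤ t - s) :
    (v s ^ 2 + v t ^ 2) / (2 * K) ≤ x t - x s := by
  have hK' : (0 : ℝ) < K := hK
  set c₁ := s + v s / K
  set c₂ := t - v t / K
  have hsc₁ : s ≤ c₁ := le_add_of_nonneg_right (div_nonneg (hv_nonneg s ⟨le_rfl, hst⟩) hK'.le)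
  have hc₂t : c₂ ≤ t := sub_le_self _ (div_nonneg (hv_nonneg t ⟨hst, le_rfl⟩) hK'.le)
  have hc₁c₂ : c₁ ≤ c₂ := by rw [add_div] at hlong; linarith
  have hI₁ : Icc s c₁ ⊆ Icc s t := Icc_subset_Icc le_rfl (hc₁c₂.trans hc₂t)
  have hI₂ : Icc c₁ c₂ ⊆ Icc s t := Icc_subset_Icc hsc₁ hc₂t
  have hI₃ : Icc c₂ t ⊆ Icc s t := Icc_subset_Icc (hsc₁.trans hc₁c₂) le_rfl
  have hbrake := mul_sub_sq_le_sub_of_lipschitzOnWith_left hsc₁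
    (fun u hu => hx u (hI₁ hu)) (hv.mono hI₁)
  have hcruise := sub_le_sub_of_hasDerivAt_le hc₁c₂ (g := fun _ => 0) (g' := fun _ => 0)
    (fun u hu => hx u (hI₂ hu)) (fun u _ => hasDerivAt_const u 0)
    (fun u hu => hv_nonneg u (hI₂ hu))
  have haccel := mul_sub_sq_le_sub_of_lipschitzOnWith_right hc₂t
    (fun u hu => hx u (hI₃ hu)) (hv.mono hI₃)
  have hramp_area : ∀ w : ℝ, w * (w / K) - K * (w / K) ^ 2 / 2 = w ^ 2 / (2 * K) := fun w => by
    field_simp; ring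
  simp only [c₁, c₂, add_sub_cancel_left, sub_sub_cancel, hramp_area] at hbrake haccel
  linarith [add_div (v s ^ 2) (v t ^ 2) (2 * K)]

end Lipschitz

theorem terminal_time_lt_of_short_distance_general
    (a_m v_m v₀ d t_f : ℝ) (ha : 0 < a_m)
    (hd : d < (v₀ ^ 2 + v_m ^ 2) / (2 * a_m))
    (x v : ℝ → ℝ) (ht : 0 ≤ t_f)
    (hx : ∀ t ∈ Set.Icc (0 : ℝ) t_f, HasDerivAt x (v t) t)
    (hLip : LipschitzOnWith (Real.toNNReal a_m) v (Set.Icc 0 t_f))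
    (hvb : ∀ t ∈ Set.Icc (0 : ℝ) t_f, 0 ≤ v t ∧ v t ≤ v_m)
    (h0 : x 0 = 0) (hv0' : v 0 = v₀) (hf : x t_f = d) (hvf : v t_f = v_m) :
    t_f < 2 * v_m / a_m := by
  by_contra! hlong
  have hv₀_le : v₀ ≤ v_m := hv0' ▸ (hvb 0 ⟨le_rfl, ht⟩).2
  have hlong' : (v 0 + v t_f) / Real.toNNReal a_m ≤ t_f - 0 := by
    rw [Real.coe_toNNReal _ ha.le, hv0', hvf, sub_zero]
    exact (div_le_div_of_nonneg_right (by linarith : v₀ + v_m ≤ 2 * v_m) ha.le).trans hlong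
  have hdist := sq_add_sq_div_le_sub_of_lipschitzOnWith (Real.toNNReal_pos.2 ha) ht hx hLip
    (fun u hu => (hvb u hu).1) hlong'
  rw [Real.coe_toNNReal _ ha.le, h0, hv0', hf, hvf, sub_zero] at hdist
  linarith

/-- **Maximal duration of a feasible trajectory that cannot stop.**
Double integrator `ẍ = u`, `|u| ≤ a_m` (encoded by `v` being `a_m`-Lipschitz),
`0 ≤ ẋ ≤ v_m`, starting at position `0` with speed `v₀ ∈ [0, v_m]` and ending at
position `d` with speed `v_m`.  If `d < (v₀² + v_m²)/(2 a_m)` then every feasible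
trajectory has terminal time `t_f < 2 v_m / a_m`. -/
theorem terminal_time_lt_of_short_distance
    (a_m v_m v₀ d t_f : ℝ) (ha : 0 < a_m) (hvm : 0 < v_m)
    (hv0 : v₀ ∈ Set.Icc 0 v_m)
    (hd : d < (v₀ ^ 2 + v_m ^ 2) / (2 * a_m))
    (x v : ℝ → ℝ) (ht : 0 ≤ t_f)
    (hx : ∀ t ∈ Set.Icc (0 : ℝ) t_f, HasDerivAt x (v t) t)
    (hLip : LipschitzOnWith (Real.toNNReal a_m) v (Set.Icc 0 t_f))
    (hvb : ∀ t ∈ Set.Icc (0 : ℝ) t_f, 0 ≤ v t ∧ v t ≤ v_m)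
    (h0 : x 0 = 0) (hv0' : v 0 = v₀) (hf : x t_f = d) (hvf : v t_f = v_m) :
    t_f < 2 * v_m / a_m :=
  terminal_time_lt_of_short_distance_general a_m v_m v₀ d t_f ha hd x v ht hx hLip hvb h0 hv0' hf
    hvf
end

section
/- For a double integrator with bounded acceleration, if a vehicle cannot come to a full stop (because the distance available is less than (v₀² + v_m²)/(2a_m)), then the minimum speed along any feasible trajectory reaching the target with full speed v_m is strictly positive. -/
/-!
Speed changes at rate at most `a_m`. Slowing from `v₀` to a speed `w` therefore covers at least
`(v₀² - w²)/(2 a_m)`, and speeding up from `w` to `v_m` at least `(v_m² - w²)/(2 a_m)`. If the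
speed `w` is reached on a trajectory of length `d`, then `v₀² + v_m² - 2 w² ≤ 2 a_m d`, so
`w² ≥ (v₀² + v_m² - 2 a_m d)/2 > 0`.
-/

open Set NNReal

theorem integral_sub_mul_sub (p L a b : ℝ) :
    ∫ s in a..b, (p - L * (s - a)) = p * (b - a) - L * (b - a) ^ 2 / 2 := by
  rw [intervalIntegral.integral_comp_sub_right (fun s => p - L * s),
    intervalIntegral.integral_sub intervalIntegrable_const
      ((continuous_const_mul L).intervalIntegrable _ _),
    intervalIntegral.integral_const_mul]
  simp
  ring

namespace LipschitzOnWith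

variable {v : ℝ → ℝ} {L : ℝ≥0} {a b : ℝ}

theorem sub_mul_sub_le (hv : LipschitzOnWith L v (Icc a b)) (hab : a ≤ b) {s : ℝ}
    (hs : s ∈ Icc a b) : v a - L * (s - a) ≤ v s := by
  have h := hv.dist_le_mul a (left_mem_Icc.2 hab) s hs
  rw [Real.dist_eq, Real.dist_eq, abs_sub_comm a s, abs_of_nonneg (sub_nonneg.2 hs.1)] at h
  linarith [le_abs_self (v a - v s)]

theorem sq_sub_sq_div_le_integral (hv : LipschitzOnWith L v (Icc a b)) (hL : 0 < L)
    (hab : a ≤ b) (hnn : ∀ s ∈ Icc a b, 0 ≤ v s) :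
    (v a ^ 2 - v b ^ 2) / (2 * L) ≤ ∫ s in a..b, v s := by
  have hint : ∀ c ∈ Icc a b, ∀ d ∈ Icc a b, IntervalIntegrable v MeasureTheory.volume c d :=
    fun c hc d hd => (hv.continuousOn.mono (uIcc_subset_Icc hc hd)).intervalIntegrable
  have hL' : (0 : ℝ) < L := hL
  rcases le_or_gt (v a) (v b) with hle | hlt
  · have hsq : v a ^ 2 ≤ v b ^ 2 := pow_le_pow_left₀ (hnn a (left_mem_Icc.2 hab)) hle 2
    calc (v a ^ 2 - v b ^ 2) / (2 * L) ≤ 0 :=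
          div_nonpos_of_nonpos_of_nonneg (by linarith) (by positivity)
      _ ≤ ∫ s in a..b, v s := intervalIntegral.integral_nonneg hab hnn
  -- `τ` is the time at which braking at full rate from `v a` reaches `v b`
  set τ := a + (v a - v b) / L with hτ
  have haτ : a ≤ τ := le_add_of_nonneg_right (div_nonneg (by linarith) hL'.le)
  have hτb : τ ≤ b := by
    have := hv.sub_mul_sub_le hab (right_mem_Icc.2 hab)
    rw [hτ, ← le_sub_iff_add_le', div_le_iff₀ hL']
    linarith
  have hτmem : τ ∈ Icc a b := ⟨haτ, hτb⟩
  calc (v a ^ 2 - v b ^ 2) / (2 * L) = ∫ s in a..τ, (v a - L * (s - a)) := by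
        rw [integral_sub_mul_sub, hτ]
        field_simp
        ring
    _ ≤ ∫ s in a..τ, v s :=
        intervalIntegral.integral_mono_on haτ ((by fun_prop : Continuous _).intervalIntegrable _ _)
          (hint a (left_mem_Icc.2 hab) τ hτmem)
          fun s hs => hv.sub_mul_sub_le hab ⟨hs.1, hs.2.trans hτb⟩
    _ ≤ (∫ s in a..τ, v s) + ∫ s in τ..b, v s :=
        le_add_of_nonneg_right <|
          intervalIntegral.integral_nonneg hτb fun s hs => hnn s ⟨haτ.trans hs.1, hs.2⟩
    _ = ∫ s in a..b, v s :=
        intervalIntegral.integral_add_adjacent_intervals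
          (hint a (left_mem_Icc.2 hab) τ hτmem) (hint τ hτmem b (right_mem_Icc.2 hab))

theorem sq_sub_sq_div_le_integral_rev (hv : LipschitzOnWith L v (Icc a b)) (hL : 0 < L)
    (hab : a ≤ b) (hnn : ∀ s ∈ Icc a b, 0 ≤ v s) :
    (v b ^ 2 - v a ^ 2) / (2 * L) ≤ ∫ s in a..b, v s := by
  have hmaps : MapsTo (fun s => a + b - s) (Icc a b) (Icc a b) :=
    fun s hs => ⟨by linarith [hs.2], by linarith [hs.1]⟩
  have hrev : LipschitzOnWith L (fun s => v (a + b - s)) (Icc a b) := by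
    simpa [Function.comp_def] using
      hv.comp (IsometryEquiv.subLeft (a + b)).isometry.lipschitz.lipschitzOnWith hmaps
  have h := hrev.sq_sub_sq_div_le_integral hL hab fun s hs => hnn _ (hmaps hs)
  simpa [intervalIntegral.integral_comp_sub_left] using h

end LipschitzOnWith

theorem min_speed_pos_of_short_distance_general
    (a_m v_m v₀ d : ℝ) (ha : 0 < a_m)
    (hd : d < (v₀ ^ 2 + v_m ^ 2) / (2 * a_m)) :
    ∃ ε > 0, ∀ (t_f : ℝ) (x v : ℝ → ℝ), 0 ≤ t_f →
      (∀ t ∈ Set.Icc (0 : ℝ) t_f, HasDerivAt x (v t) t) →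
      LipschitzOnWith (Real.toNNReal a_m) v (Set.Icc 0 t_f) →
      (∀ t ∈ Set.Icc (0 : ℝ) t_f, 0 ≤ v t ∧ v t ≤ v_m) →
      x 0 = 0 → v 0 = v₀ → x t_f = d → v t_f = v_m →
      ∀ t ∈ Set.Icc (0 : ℝ) t_f, ε ≤ v t := by
  have hgap : 0 < (v₀ ^ 2 + v_m ^ 2 - 2 * a_m * d) / 2 := by
    have := (lt_div_iff₀ (by positivity)).mp hd
    linarith
  refine ⟨√((v₀ ^ 2 + v_m ^ 2 - 2 * a_m * d) / 2), Real.sqrt_pos.mpr hgap, ?_⟩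
  intro t_f x v htf hx hv hbounds hx0 hv0 hxf hvf t ht
  have hL : 0 < Real.toNNReal a_m := Real.toNNReal_pos.2 ha
  have hnn : ∀ s ∈ Icc 0 t_f, 0 ≤ v s := fun s hs => (hbounds s hs).1
  have hint : IntervalIntegrable v MeasureTheory.volume 0 t_f :=
    hv.continuousOn.intervalIntegrable_of_Icc htf
  have hdist : ∫ s in (0 : ℝ)..t_f, v s = d := by
    rw [intervalIntegral.integral_eq_sub_of_hasDerivAt
      (fun s hs => hx s (uIcc_of_le htf ▸ hs)) hint, hxf, hx0, sub_zero]
  have hbrake := (hv.mono (Icc_subset_Icc_right ht.2)).sq_sub_sq_div_le_integral hL ht.1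
    fun s hs => hnn s ⟨hs.1, hs.2.trans ht.2⟩
  have haccel := (hv.mono (Icc_subset_Icc_left ht.1)).sq_sub_sq_div_le_integral_rev hL ht.2
    fun s hs => hnn s ⟨ht.1.trans hs.1, hs.2⟩
  have hsplit : (∫ s in (0 : ℝ)..t, v s) + ∫ s in t..t_f, v s = d := by
    have ht' : t ∈ uIcc 0 t_f := uIcc_of_le htf ▸ ht
    rw [intervalIntegral.integral_add_adjacent_intervals
      (hint.mono_set (uIcc_subset_uIcc left_mem_uIcc ht'))
      (hint.mono_set (uIcc_subset_uIcc ht' right_mem_uIcc)), hdist]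
  have htotal := add_le_add hbrake haccel
  rw [hsplit, ← add_div, div_le_iff₀ (by positivity), Real.coe_toNNReal _ ha.le, hv0, hvf]
    at htotal
  rw [Real.sqrt_le_left (hnn t ht)]
  linarith

/-- **Strictly positive minimum speed when a full stop is impossible.**
Double integrator `ẍ = u`, `|u| ≤ a_m`, `ẋ ∈ [0, v_m]`, initial state `(0, v₀)`,
terminal condition `x(t_f) = d`, `ẋ(t_f) = v_m` with `0 < d < (v₀² + v_m²)/(2 a_m)`
(the distance needed to stop from `v₀` and re-accelerate to `v_m`).  Then the infimum
over all feasible trajectories and all times of the speed is strictly positive: there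
is `ε > 0` bounding the speed from below along every feasible trajectory. -/
theorem min_speed_pos_of_short_distance
    (a_m v_m v₀ d : ℝ) (ha : 0 < a_m) (hvm : 0 < v_m)
    (hv0 : v₀ ∈ Set.Icc 0 v_m) (hd0 : 0 < d)
    (hd : d < (v₀ ^ 2 + v_m ^ 2) / (2 * a_m)) :
    ∃ ε > 0, ∀ (t_f : ℝ) (x v : ℝ → ℝ), 0 ≤ t_f →
      (∀ t ∈ Set.Icc (0 : ℝ) t_f, HasDerivAt x (v t) t) →
      LipschitzOnWith (Real.toNNReal a_m) v (Set.Icc 0 t_f) →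
      (∀ t ∈ Set.Icc (0 : ℝ) t_f, 0 ≤ v t ∧ v t ≤ v_m) →
      x 0 = 0 → v 0 = v₀ → x t_f = d → v t_f = v_m →
      ∀ t ∈ Set.Icc (0 : ℝ) t_f, ε ≤ v t :=
  min_speed_pos_of_short_distance_general a_m v_m v₀ d ha hd
end

section
/- The travel-time map T(ν) = ∫_{p₀}^0 dp / V_ν(p) + C, where V_ν(p) = min(max(V_x̄(p), ν), V_x̂(p)) and both V_x̄, V_x̂ take values in [0, v_m] with V_x̄ ≤ V_x̂ and V_x̂ bounded below by a positive constant, is continuous in ν on (0, v_m]; moreover, if V_x̄ vanishes somewhere then T(ν) → ∫_{p₀}^0 dp/V_x̄(p) + C (possibly +∞, interpreted via monotone convergence) as ν → 0⁺. -/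
open MeasureTheory Set Filter Topology
open scoped ENNReal Interval

/-!
For `ν > 0` the clipped path satisfies `V_ν ≥ min ν (inf V_x̂) > 0`, so near any `ν₀ > 0`
the integrands `1 / V_ν` are uniformly bounded and depend continuously on `ν`; dominated
convergence gives continuity of `T`. As `ν ↓ 0` the integrands `(V_ν)⁻¹` increase pointwise
to `(V_x̄)⁻¹` in `ℝ≥0∞`, so monotone convergence along `ν = 1/(n+1)` identifies the monotone
limit of `T`.
-/

theorem Antitone.tendsto_nhdsGT_of_tendsto_comp {α β ι : Type*} [LinearOrder α]
    [TopologicalSpace α] [OrderTopology α] [ConditionallyCompleteLinearOrder β]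
    [TopologicalSpace β] [OrderTopology β] {f : α → β} (hf : Antitone f) {x : α}
    {l : Filter ι} [l.NeBot] {u : ι → α} {y : β} (hu : Tendsto u l (𝓝[>] x))
    (hfu : Tendsto (f ∘ u) l (𝓝 y)) : Tendsto f (𝓝[>] x) (𝓝 y) := by
  have hlim := hf.tendsto_nhdsGT x
  rwa [tendsto_nhds_unique (hlim.comp hu) hfu] at hlim

/-- The path `V_ν` of the paper, with `lo = V_x̄` and `hi = V_x̂`. -/
def clippedPath {α : Type*} (lo hi : α → ℝ) (ν : ℝ) (p : α) : ℝ :=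
  min (max (lo p) ν) (hi p)

namespace clippedPath

section

variable {α : Type*} {lo hi : α → ℝ}

theorem measurable [MeasurableSpace α] (hlo : Measurable lo) (hhi : Measurable hi) (ν : ℝ) :
    Measurable (clippedPath lo hi ν) :=
  (hlo.max measurable_const).min hhi

theorem continuous (p : α) : Continuous fun ν => clippedPath lo hi ν p := by
  unfold clippedPath
  fun_prop

theorem monotone (p : α) : Monotone fun ν => clippedPath lo hi ν p :=
  fun _ _ h => min_le_min_right _ (max_le_max_left _ h)

theorem min_le {c ν : ℝ} (hν : c ≤ ν) (p : α) : min c (hi p) ≤ clippedPath lo hi ν p :=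
  min_le_min_right _ (hν.trans (le_max_right _ _))

theorem pos {ν : ℝ} {p : α} (hν : 0 < ν) (hp : 0 < hi p) : 0 < clippedPath lo hi ν p :=
  (lt_min hν hp).trans_le (min_le le_rfl p)

theorem zero_eq {p : α} (h0 : 0 ≤ lo p) (hle : lo p ≤ hi p) :
    clippedPath lo hi 0 p = lo p := by
  rw [clippedPath, max_eq_left h0, min_eq_left hle]

theorem norm_one_div_le {c m ν : ℝ} {p : α} (hc : 0 < c) (hν : c ≤ ν) (hm : 0 < m)
    (hmp : m ≤ hi p) : ‖1 / clippedPath lo hi ν p‖ ≤ 1 / min c m := by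
  have hcm : min c m ≤ clippedPath lo hi ν p := (min_le_min_left c hmp).trans (min_le hν p)
  have hpos : 0 < min c m := lt_min hc hm
  rw [Real.norm_of_nonneg (one_div_nonneg.2 (hpos.trans_le hcm).le)]
  exact one_div_le_one_div_of_le hpos hcm

theorem tendsto_lintegral_inv [MeasurableSpace α] {μ : Measure α} (hlo : Measurable lo)
    (hhi : Measurable hi) (h0 : ∀ p, 0 ≤ lo p) (hle : ∀ p, lo p ≤ hi p) :
    Tendsto (fun ν => ∫⁻ p, (ENNReal.ofReal (clippedPath lo hi ν p))⁻¹ ∂μ) (𝓝[>] 0)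
      (𝓝 (∫⁻ p, (ENNReal.ofReal (lo p))⁻¹ ∂μ)) := by
  have hinv_anti (p : α) : Antitone fun ν => (ENNReal.ofReal (clippedPath lo hi ν p))⁻¹ :=
    fun _ _ h => ENNReal.inv_le_inv.2 (ENNReal.ofReal_le_ofReal (monotone p h))
  have hinv_cont (p : α) : Continuous fun ν => (ENNReal.ofReal (clippedPath lo hi ν p))⁻¹ :=
    (ENNReal.continuous_ofReal.comp (continuous p)).inv
  set u : ℕ → ℝ := fun n => 1 / ((n : ℝ) + 1)
  have hu : Tendsto u atTop (𝓝 0) := tendsto_one_div_add_atTop_nhds_zero_nat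
  have hu_anti : Antitone u := fun n k h =>
    one_div_le_one_div_of_le (by positivity) (by gcongr)
  have hu_pos : Tendsto u atTop (𝓝[>] 0) :=
    tendsto_nhdsWithin_iff.2 ⟨hu, Eventually.of_forall fun _ => mem_Ioi.2 Nat.one_div_pos_of_nat⟩
  refine Antitone.tendsto_nhdsGT_of_tendsto_comp
    (fun _ _ h => lintegral_mono fun p => hinv_anti p h) hu_pos
    (lintegral_tendsto_of_tendsto_of_monotone
      (fun n => ((measurable hlo hhi _).ennreal_ofReal.inv).aemeasurable)
      (Eventually.of_forall fun p => (hinv_anti p).comp hu_anti)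
      (Eventually.of_forall fun p => ?_))
  have hlim := ((hinv_cont p).tendsto 0).comp hu
  rwa [zero_eq (h0 p) (hle p)] at hlim

end

variable {lo hi : ℝ → ℝ} {a b m : ℝ}

theorem intervalIntegrable_one_div (hlo : Measurable lo) (hhi : Measurable hi) (hm : 0 < m)
    (hlow : ∀ p ∈ [[a, b]], m ≤ hi p) {ν : ℝ} (hν : 0 < ν) :
    IntervalIntegrable (fun p => 1 / clippedPath lo hi ν p) volume a b :=
  (intervalIntegrable_const (c := 1 / min ν m)).mono_fun'
    (measurable_const.div (measurable hlo hhi ν)).aestronglyMeasurable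
    ((ae_restrict_iff' measurableSet_uIoc).2 <| Eventually.of_forall fun p hp =>
      norm_one_div_le hν le_rfl hm (hlow p (uIoc_subset_uIcc hp)))

theorem continuousOn_intervalIntegral_one_div (hlo : Measurable lo) (hhi : Measurable hi)
    (hm : 0 < m) (hlow : ∀ p ∈ [[a, b]], m ≤ hi p) :
    ContinuousOn (fun ν => ∫ p in a..b, 1 / clippedPath lo hi ν p) (Ioi 0) := by
  intro ν₀ hν₀
  refine ContinuousAt.continuousWithinAt <|
    intervalIntegral.continuousAt_of_dominated_interval (bound := fun _ => 1 / min (ν₀ / 2) m)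
      (Eventually.of_forall fun ν =>
        (measurable_const.div (measurable hlo hhi ν)).aestronglyMeasurable)
      ?_ intervalIntegrable_const
      (Eventually.of_forall fun p hp => continuousAt_const.div (continuous p).continuousAt
        (pos hν₀ (hm.trans_le (hlow p (uIoc_subset_uIcc hp)))).ne')
  filter_upwards [Ioi_mem_nhds (half_lt_self hν₀)] with ν hν
  exact Eventually.of_forall fun p hp =>
    norm_one_div_le (half_pos hν₀) hν.le hm (hlow p (uIoc_subset_uIcc hp))

theorem ofReal_intervalIntegral_one_div (hlo : Measurable lo) (hhi : Measurable hi)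
    (hm : 0 < m) (hab : a ≤ b) (hlow : ∀ p ∈ Icc a b, m ≤ hi p) {ν : ℝ} (hν : 0 < ν) :
    ENNReal.ofReal (∫ p in a..b, 1 / clippedPath lo hi ν p)
      = ∫⁻ p in Icc a b, (ENNReal.ofReal (clippedPath lo hi ν p))⁻¹ := by
  have hpos (p : ℝ) (hp : p ∈ Ioc a b) : 0 < clippedPath lo hi ν p :=
    pos hν (hm.trans_le (hlow p (Ioc_subset_Icc_self hp)))
  have hint := intervalIntegrable_one_div hlo hhi hm (by rwa [uIcc_of_le hab]) hν
  rw [intervalIntegral.integral_of_le hab, ofReal_integral_eq_lintegral_ofReal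
      ((intervalIntegrable_iff_integrableOn_Ioc_of_le hab).1 hint)
      ((ae_restrict_iff' measurableSet_Ioc).2 <| Eventually.of_forall fun p hp =>
        one_div_nonneg.2 (hpos p hp).le),
    ← Measure.restrict_congr_set Ioc_ae_eq_Icc]
  refine setLIntegral_congr_fun measurableSet_Ioc fun p hp => ?_
  rw [one_div, ENNReal.ofReal_inv_of_pos (hpos p hp)]

end clippedPath

theorem travel_time_map_continuous_general
    (p₀ v_m C mlow : ℝ) (hp : p₀ < 0) (hC : 0 ≤ C) (hm : 0 < mlow)
    (Vbar Vhat : ℝ → ℝ) (hmb : Measurable Vbar) (hmh : Measurable Vhat)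
    (hrange : ∀ p, 0 ≤ Vbar p ∧ Vbar p ≤ Vhat p ∧ Vhat p ≤ v_m)
    (hlow : ∀ p ∈ Set.Icc p₀ 0, mlow ≤ Vhat p) :
    ContinuousOn
      (fun ν => (∫ p in p₀..0, 1 / min (max (Vbar p) ν) (Vhat p)) + C)
      (Set.Ioc 0 v_m) ∧
    ((∃ p ∈ Set.Icc p₀ 0, Vbar p = 0) →
      Filter.Tendsto
        (fun ν => ENNReal.ofReal
          ((∫ p in p₀..0, 1 / min (max (Vbar p) ν) (Vhat p)) + C))
        (nhdsWithin 0 (Set.Ioi 0))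
        (nhds ((∫⁻ p in Set.Icc p₀ 0, (ENNReal.ofReal (Vbar p))⁻¹)
                + ENNReal.ofReal C))) := by
  refine ⟨?_, fun _ => ?_⟩
  · have hcont := clippedPath.continuousOn_intervalIntegral_one_div hmb hmh hm
      (by rwa [uIcc_of_le hp.le])
    exact (hcont.add continuousOn_const).mono Ioc_subset_Ioi_self
  · refine ((clippedPath.tendsto_lintegral_inv hmb hmh (fun p => (hrange p).1)
      (fun p => (hrange p).2.1)).add tendsto_const_nhds).congr' ?_
    filter_upwards [self_mem_nhdsWithin] with ν hν
    have hnonneg : 0 ≤ ∫ p in p₀..0, 1 / clippedPath Vbar Vhat ν p :=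
      intervalIntegral.integral_nonneg hp.le fun p hp' =>
        one_div_nonneg.2 (clippedPath.pos hν (hm.trans_le (hlow p hp'))).le
    change _ = ENNReal.ofReal ((∫ p in p₀..0, 1 / clippedPath Vbar Vhat ν p) + C)
    rw [ENNReal.ofReal_add hnonneg hC,
      clippedPath.ofReal_intervalIntegral_one_div hmb hmh hm hp.le hlow hν]

/-- **Continuity of the travel-time map for clipped velocity paths.**
`p₀ < 0`, `Vbar ≤ Vhat` are measurable velocity paths with values in `[0, v_m]`,
`Vhat` bounded below by `mlow > 0` on `[p₀, 0]`, `C ≥ 0` a total waiting time, and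
`V_ν(p) = min (max (Vbar p) ν) (Vhat p)` the clipped velocity path.  Then the
travel-time map `T(ν) = ∫_{p₀}^0 dp / V_ν(p) + C` is continuous on `(0, v_m]`;
moreover, if `Vbar` vanishes somewhere, then as `ν → 0⁺`, `T(ν)` tends (in `ℝ≥0∞`, by
monotone convergence) to `∫_{p₀}^0 dp / Vbar(p) + C`, possibly `+∞`. -/
theorem travel_time_map_continuous
    (p₀ v_m C mlow : ℝ) (hp : p₀ < 0) (hv : 0 < v_m) (hC : 0 ≤ C) (hm : 0 < mlow)
    (Vbar Vhat : ℝ → ℝ) (hmb : Measurable Vbar) (hmh : Measurable Vhat)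
    (hrange : ∀ p, 0 ≤ Vbar p ∧ Vbar p ≤ Vhat p ∧ Vhat p ≤ v_m)
    (hlow : ∀ p ∈ Set.Icc p₀ 0, mlow ≤ Vhat p) :
    ContinuousOn
      (fun ν => (∫ p in p₀..0, 1 / min (max (Vbar p) ν) (Vhat p)) + C)
      (Set.Ioc 0 v_m) ∧
    ((∃ p ∈ Set.Icc p₀ 0, Vbar p = 0) →
      Filter.Tendsto
        (fun ν => ENNReal.ofReal
          ((∫ p in p₀..0, 1 / min (max (Vbar p) ν) (Vhat p)) + C))
        (nhdsWithin 0 (Set.Ioi 0))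
        (nhds ((∫⁻ p in Set.Icc p₀ 0, (ENNReal.ofReal (Vbar p))⁻¹)
                + ENNReal.ofReal C))) :=
  travel_time_map_continuous_general p₀ v_m C mlow hp hC hm Vbar Vhat hmb hmh hrange hlow
end

section
/- From any state (p₀, v₀) in the set F = {(p, v) ∈ [−L, 0] × [0, v_m] : p + v²/(2a_m) ≤ −v_m²/(2a_m) − c}, where c ≥ 0, the vehicle can reach the state (−c, v_m) at any prescribed time sufficiently far in the future: there exists T₀ such that for every t_f ≥ T₀ there is a feasible trajectory (dynamics ẍ = u, |u| ≤ a_m, velocity in [0, v_m]) starting at (p₀, v₀) at time 0 and arriving at (−c, v_m) at time t_f. -/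
/-!
Brake at rate `a_m` to a standstill, wait, accelerate at rate `a_m` up to `v_m`, then cruise.
Braking and accelerating cover `v₀² / (2 a_m) + v_m² / (2 a_m)`, which by the inequality defining
`F` is at most the distance `-c - p₀` to the target; the remainder fixes the cruising time. Only
the waiting time is free, so any `t_f` beyond the sum `T₀` of the braking, accelerating and
cruising times is met. The velocity is a combination of ramps `t ↦ max t 0`, so the position is
the same combination of their antiderivatives `max t 0 ^ 2 / 2`.
-/

open Set

theorem hasDerivAt_max_zero_sq_div_two (s : ℝ) :
    HasDerivAt (fun y : ℝ => max y 0 ^ 2 / 2) (max s 0) s := by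
  refine hasDerivAt_of_hasDerivAt_of_ne' (f := fun y : ℝ => max y 0 ^ 2 / 2)
    (g := fun y => max y 0) (x := 0) (fun y hy => ?_) (by fun_prop) (by fun_prop) s
  rcases hy.lt_or_gt with hy | hy
  · have hzero : (fun y : ℝ => max y 0 ^ 2 / 2) =ᶠ[nhds y] fun _ => 0 := by
      filter_upwards [Iio_mem_nhds hy] with z (hz : z < 0)
      simp [max_eq_right hz.le]
    rw [max_eq_right hy.le]
    exact (hasDerivAt_const y 0).congr_of_eventuallyEq hzero
  · have hsq : (fun y : ℝ => max y 0 ^ 2 / 2) =ᶠ[nhds y] fun z => z ^ 2 / 2 := by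
      filter_upwards [Ioi_mem_nhds hy] with z (hz : 0 < z)
      rw [max_eq_left hz.le]
    rw [max_eq_left hy.le]
    simpa using ((hasDerivAt_pow 2 y).div_const 2).congr_of_eventuallyEq hsq

/-- For `t₁ ≤ t₂ ≤ t₃`: decelerate at rate `a` until standstill at `t₁`, stand still on
`[t₁, t₂]`, accelerate at rate `a` on `[t₂, t₃]`, then cruise. -/
def stopGoVelocity (a t₁ t₂ t₃ t : ℝ) : ℝ :=
  a * (max (t₁ - t) 0 + max (t - t₂) 0 - max (t - t₃) 0)

/-- Normalized to vanish at the standstill time `t₁`. -/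
noncomputable def stopGoPosition (a t₁ t₂ t₃ t : ℝ) : ℝ :=
  a * (max (t - t₂) 0 ^ 2 / 2 - max (t - t₃) 0 ^ 2 / 2 - max (t₁ - t) 0 ^ 2 / 2)

section StopGo

variable {a t₁ t₂ t₃ t : ℝ}

theorem hasDerivAt_stopGoPosition (a t₁ t₂ t₃ t : ℝ) :
    HasDerivAt (stopGoPosition a t₁ t₂ t₃) (stopGoVelocity a t₁ t₂ t₃ t) t := by
  have hbrake := (hasDerivAt_max_zero_sq_div_two (t₁ - t)).comp t ((hasDerivAt_id t).const_sub t₁)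
  have hgo := (hasDerivAt_max_zero_sq_div_two (t - t₂)).comp t ((hasDerivAt_id t).sub_const t₂)
  have hcruise :=
    (hasDerivAt_max_zero_sq_div_two (t - t₃)).comp t ((hasDerivAt_id t).sub_const t₃)
  exact (((hgo.sub hcruise).sub hbrake).const_mul a).congr_deriv (by rw [stopGoVelocity]; ring)

theorem stopGoVelocity_eq_max (h₁₂ : t₁ ≤ t₂) (h₂₃ : t₂ ≤ t₃) :
    stopGoVelocity a t₁ t₂ t₃ t = a * max (max (t₁ - t) (min (t - t₂) (t₃ - t₂))) 0 := by
  rw [stopGoVelocity]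
  congr 1
  simp only [max_def, min_def]
  split_ifs <;> linarith

theorem lipschitzWith_stopGoVelocity (ha : 0 ≤ a) (h₁₂ : t₁ ≤ t₂) (h₂₃ : t₂ ≤ t₃) :
    LipschitzWith a.toNNReal (stopGoVelocity a t₁ t₂ t₃) := by
  have hprofile : LipschitzWith 1 fun t => max (max (t₁ - t) (min (t - t₂) (t₃ - t₂))) 0 := by
    simpa using (((IsometryEquiv.subLeft t₁).isometry.lipschitz.max
      ((IsometryEquiv.subRight t₂).isometry.lipschitz.min_const (t₃ - t₂))).max_const 0)
  have hscaled := (lipschitzWith_smul a).comp hprofile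
  rw [← Real.toNNReal_eq_nnnorm_of_nonneg ha, mul_one] at hscaled
  rw [show stopGoVelocity a t₁ t₂ t₃ = _ from funext fun t => stopGoVelocity_eq_max h₁₂ h₂₃]
  exact hscaled

theorem stopGoVelocity_mem_Icc (ha : 0 ≤ a) (h₁₂ : t₁ ≤ t₂) (h₂₃ : t₂ ≤ t₃)
    (ht : t₁ - (t₃ - t₂) ≤ t) : stopGoVelocity a t₁ t₂ t₃ t ∈ Icc 0 (a * (t₃ - t₂)) := by
  rw [stopGoVelocity_eq_max h₁₂ h₂₃]
  refine ⟨mul_nonneg ha (le_max_right _ _), mul_le_mul_of_nonneg_left ?_ ha⟩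
  exact max_le (max_le (by linarith) (min_le_right _ _)) (by linarith)

theorem stopGoVelocity_of_le (h₁₂ : t₁ ≤ t₂) (h₂₃ : t₂ ≤ t₃) (ht : t ≤ t₁) :
    stopGoVelocity a t₁ t₂ t₃ t = a * (t₁ - t) := by
  simp only [stopGoVelocity, max_eq_left (sub_nonneg.2 ht), max_eq_right (sub_nonpos.2
    (ht.trans h₁₂)), max_eq_right (sub_nonpos.2 ((ht.trans h₁₂).trans h₂₃))]
  ring

theorem stopGoPosition_of_le (h₁₂ : t₁ ≤ t₂) (h₂₃ : t₂ ≤ t₃) (ht : t ≤ t₁) :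
    stopGoPosition a t₁ t₂ t₃ t = -(a * (t₁ - t) ^ 2 / 2) := by
  simp only [stopGoPosition, max_eq_left (sub_nonneg.2 ht), max_eq_right (sub_nonpos.2
    (ht.trans h₁₂)), max_eq_right (sub_nonpos.2 ((ht.trans h₁₂).trans h₂₃))]
  ring

theorem stopGoVelocity_of_ge (h₁₂ : t₁ ≤ t₂) (h₂₃ : t₂ ≤ t₃) (ht : t₃ ≤ t) :
    stopGoVelocity a t₁ t₂ t₃ t = a * (t₃ - t₂) := by
  simp only [stopGoVelocity, max_eq_right (sub_nonpos.2 ((h₁₂.trans h₂₃).trans ht)),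
    max_eq_left (sub_nonneg.2 (h₂₃.trans ht)), max_eq_left (sub_nonneg.2 ht)]
  ring

theorem stopGoPosition_of_ge (h₁₂ : t₁ ≤ t₂) (h₂₃ : t₂ ≤ t₃) (ht : t₃ ≤ t) :
    stopGoPosition a t₁ t₂ t₃ t = a * (t₃ - t₂) ^ 2 / 2 + a * (t₃ - t₂) * (t - t₃) := by
  simp only [stopGoPosition, max_eq_right (sub_nonpos.2 ((h₁₂.trans h₂₃).trans ht)),
    max_eq_left (sub_nonneg.2 (h₂₃.trans ht)), max_eq_left (sub_nonneg.2 ht)]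
  ring

end StopGo

theorem reachable_at_any_late_time_general
    (a_m v_m c p₀ v₀ : ℝ) (ha : 0 < a_m) (hv : 0 < v_m)
    (hv0 : v₀ ∈ Set.Icc 0 v_m)
    (hF : p₀ + v₀ ^ 2 / (2 * a_m) ≤ -(v_m ^ 2 / (2 * a_m)) - c) :
    ∃ T₀ : ℝ, ∀ t_f ≥ T₀, ∃ x v : ℝ → ℝ,
      (∀ t ∈ Set.Icc (0 : ℝ) t_f, HasDerivAt x (v t) t) ∧
      LipschitzOnWith (Real.toNNReal a_m) v (Set.Icc 0 t_f) ∧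
      (∀ t ∈ Set.Icc (0 : ℝ) t_f, 0 ≤ v t ∧ v t ≤ v_m) ∧
      x 0 = p₀ ∧ v 0 = v₀ ∧ x t_f = -c ∧ v t_f = v_m := by
  obtain ⟨hv₀, hv₀m⟩ := hv0
  set t₁ := v₀ / a_m
  set S := v_m / a_m
  set D := (-c - p₀ - v₀ ^ 2 / (2 * a_m) - v_m ^ 2 / (2 * a_m)) / v_m
  have ht₁v : a_m * t₁ = v₀ := mul_div_cancel₀ v₀ ha.ne'
  have hS : a_m * S = v_m := mul_div_cancel₀ v_m ha.ne'
  have hD : v_m * D = -c - p₀ - v₀ ^ 2 / (2 * a_m) - v_m ^ 2 / (2 * a_m) :=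
    mul_div_cancel₀ _ hv.ne'
  have hbrake : a_m * t₁ ^ 2 / 2 = v₀ ^ 2 / (2 * a_m) := by rw [← ht₁v]; field_simp
  have haccel : a_m * S ^ 2 / 2 = v_m ^ 2 / (2 * a_m) := by rw [← hS]; field_simp
  have ht₁ : 0 ≤ t₁ := by positivity
  have ht₁S : t₁ ≤ S := div_le_div_of_nonneg_right hv₀m ha.le
  have hD₀ : 0 ≤ D := div_nonneg (by linarith) hv.le
  refine ⟨t₁ + S + D, fun t_f ht_f => ?_⟩
  have h₁₂ : t₁ ≤ t_f - D - S := by linarith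
  have h₂₃ : t_f - D - S ≤ t_f - D := by linarith
  have hcruise : a_m * (t_f - D - (t_f - D - S)) = v_m := by rw [← hS]; ring
  refine ⟨fun t => p₀ + a_m * t₁ ^ 2 / 2 + stopGoPosition a_m t₁ (t_f - D - S) (t_f - D) t,
    stopGoVelocity a_m t₁ (t_f - D - S) (t_f - D),
    fun t _ => (hasDerivAt_stopGoPosition _ _ _ _ t).const_add _,
    (lipschitzWith_stopGoVelocity ha.le h₁₂ h₂₃).lipschitzOnWith, fun t ht => ?_, ?_, ?_, ?_, ?_⟩
  · exact hcruise ▸ stopGoVelocity_mem_Icc ha.le h₁₂ h₂₃ (by linarith [ht.1])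
  · simp only [stopGoPosition_of_le h₁₂ h₂₃ ht₁]
    ring
  · rw [stopGoVelocity_of_le h₁₂ h₂₃ ht₁]
    linear_combination ht₁v
  · simp only [stopGoPosition_of_ge h₁₂ h₂₃ (by linarith : t_f - D ≤ t_f)]
    linear_combination hbrake + haccel + hD + D * hS
  · rw [stopGoVelocity_of_ge h₁₂ h₂₃ (by linarith), hcruise]

/-- **Reachability of `(−c, v_m)` at any sufficiently late time from the set `F`.**
Double integrator `ẍ = u`, `|u| ≤ a_m` (encoded by `v` being `a_m`-Lipschitz),
`ẋ ∈ [0, v_m]`.  From any state `(p₀, v₀) ∈ [−L, 0] × [0, v_m]` in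
`F = {(p,v) : p + v²/(2a_m) ≤ −v_m²/(2a_m) − c}` (with `c ≥ 0`), there exists `T₀`
such that for every prescribed terminal time `t_f ≥ T₀` there is a feasible trajectory
starting at `(p₀, v₀)` at time `0` and arriving at `(−c, v_m)` at time `t_f`. -/
theorem reachable_at_any_late_time
    (a_m v_m L c p₀ v₀ : ℝ) (ha : 0 < a_m) (hv : 0 < v_m) (hL : 0 < L) (hc : 0 ≤ c)
    (hp : p₀ ∈ Set.Icc (-L) 0) (hv0 : v₀ ∈ Set.Icc 0 v_m)
    (hF : p₀ + v₀ ^ 2 / (2 * a_m) ≤ -(v_m ^ 2 / (2 * a_m)) - c) :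
    ∃ T₀ : ℝ, ∀ t_f ≥ T₀, ∃ x v : ℝ → ℝ,
      (∀ t ∈ Set.Icc (0 : ℝ) t_f, HasDerivAt x (v t) t) ∧
      LipschitzOnWith (Real.toNNReal a_m) v (Set.Icc 0 t_f) ∧
      (∀ t ∈ Set.Icc (0 : ℝ) t_f, 0 ≤ v t ∧ v t ≤ v_m) ∧
      x 0 = p₀ ∧ v 0 = v₀ ∧ x t_f = -c ∧ v t_f = v_m :=
  reachable_at_any_late_time_general a_m v_m c p₀ v₀ ha hv hv0 hF
end

section
/- Conversely, if (p₀, v₀) ∈ [−L, 0] × [0, v_m] satisfies |p₀ − (−c)| < (v₀² + v_m²)/(2a_m) (i.e., the state is in the reachable set of (−c, v_m) but outside F), then every feasible trajectory from (p₀, v₀) to (−c, v_m) has duration strictly less than 2v_m/a_m. -/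
/-!
The velocity is `a_m`-Lipschitz, so it stays above the ramp `v₀ - a_m t` during the first
`v₀ / a_m` time units and above `v_m - a_m (t_f - t)` during the last `v_m / a_m`, and it is
nonnegative in between. If `t_f ≥ 2 v_m / a_m` these two windows do not overlap, and integrating
gives a travelled distance `-c - p₀ ≥ (v₀² + v_m²) / (2 a_m)`, contradicting the hypothesis.
-/

open Set

theorem integral_sub_mul_sub_eq_sq_div {w a t₀ : ℝ} (ha : a ≠ 0) :
    ∫ t in t₀..t₀ + w / a, (w - a * (t - t₀)) = w ^ 2 / (2 * a) := by
  rw [intervalIntegral.integral_comp_sub_right (fun t => w - a * t), sub_self, add_sub_cancel_left,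
    intervalIntegral.integral_sub intervalIntegrable_const
      ((continuous_const_mul a).intervalIntegrable _ _),
    intervalIntegral.integral_const_mul, integral_id, intervalIntegral.integral_const, smul_eq_mul]
  field_simp
  ring

theorem sq_div_two_mul_le_integral_of_lipschitzOnWith_left {v : ℝ → ℝ} {a t₀ : ℝ} (ha : 0 < a)
    (hv : LipschitzOnWith (Real.toNNReal a) v (Icc t₀ (t₀ + v t₀ / a))) (h0 : 0 ≤ v t₀) :
    v t₀ ^ 2 / (2 * a) ≤ ∫ t in t₀..t₀ + v t₀ / a, v t := by
  have hT : t₀ ≤ t₀ + v t₀ / a := le_add_of_nonneg_right (div_nonneg h0 ha.le)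
  rw [← integral_sub_mul_sub_eq_sq_div ha.ne']
  refine intervalIntegral.integral_mono_on hT (Continuous.intervalIntegrable (by fun_prop) _ _)
    (hv.continuousOn.intervalIntegrable_of_Icc hT) fun t ht => ?_
  have := hv.le_add_mul (left_mem_Icc.2 hT) ht
  rw [Real.coe_toNNReal a ha.le, Real.dist_eq, abs_sub_comm,
    abs_of_nonneg (sub_nonneg.2 ht.1)] at this
  linarith

theorem sq_div_two_mul_le_integral_of_lipschitzOnWith_right {v : ℝ → ℝ} {a t₁ : ℝ} (ha : 0 < a)
    (hv : LipschitzOnWith (Real.toNNReal a) v (Icc (t₁ - v t₁ / a) t₁)) (h1 : 0 ≤ v t₁) :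
    v t₁ ^ 2 / (2 * a) ≤ ∫ t in t₁ - v t₁ / a..t₁, v t := by
  -- time reversal `t ↦ -t` turns this into the `_left` case
  have hrev : LipschitzOnWith (Real.toNNReal a) (fun t => v (-t)) (Icc (-t₁) (-t₁ + v t₁ / a)) :=
    LipschitzOnWith.of_dist_le_mul fun x hx y hy => by
      simpa only [dist_neg_neg] using hv.dist_le_mul (-x) ⟨by linarith [hx.2], by linarith [hx.1]⟩
        (-y) ⟨by linarith [hy.2], by linarith [hy.1]⟩
  have := sq_div_two_mul_le_integral_of_lipschitzOnWith_left (v := fun t => v (-t)) (t₀ := -t₁) ha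
    (by simpa only [neg_neg] using hrev) (by simpa only [neg_neg] using h1)
  simpa only [neg_neg, intervalIntegral.integral_comp_neg, neg_add, neg_add_eq_sub, neg_sub]
    using this

theorem sq_add_sq_div_two_mul_le_integral_of_lipschitzOnWith {v : ℝ → ℝ} {a t₀ t₁ : ℝ}
    (ha : 0 < a) (hle : t₀ ≤ t₁) (hv : LipschitzOnWith (Real.toNNReal a) v (Icc t₀ t₁))
    (hnonneg : ∀ t ∈ Icc t₀ t₁, 0 ≤ v t) (hlong : (v t₀ + v t₁) / a ≤ t₁ - t₀) :
    (v t₀ ^ 2 + v t₁ ^ 2) / (2 * a) ≤ ∫ t in t₀..t₁, v t := by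
  have h₀ := hnonneg t₀ (left_mem_Icc.2 hle)
  have h₁ := hnonneg t₁ (right_mem_Icc.2 hle)
  set s₀ := t₀ + v t₀ / a
  set s₁ := t₁ - v t₁ / a
  have hs₀ : t₀ ≤ s₀ := le_add_of_nonneg_right (div_nonneg h₀ ha.le)
  have hs : s₀ ≤ s₁ := by rw [add_div] at hlong; linarith
  have hs₁ : s₁ ≤ t₁ := sub_le_self _ (div_nonneg h₁ ha.le)
  have hint : ∀ {a b}, t₀ ≤ a → a ≤ b → b ≤ t₁ → IntervalIntegrable v MeasureTheory.volume a b :=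
    fun hta hab htb => (hv.continuousOn.mono (Icc_subset_Icc hta htb)).intervalIntegrable_of_Icc hab
  rw [← intervalIntegral.integral_add_adjacent_intervals (hint le_rfl hs₀ (hs.trans hs₁))
      (hint hs₀ (hs.trans hs₁) le_rfl),
    ← intervalIntegral.integral_add_adjacent_intervals (hint hs₀ hs hs₁)
      (hint (hs₀.trans hs) hs₁ le_rfl)]
  have hleft := sq_div_two_mul_le_integral_of_lipschitzOnWith_left ha
    (hv.mono (Icc_subset_Icc le_rfl (hs.trans hs₁))) h₀
  have hright := sq_div_two_mul_le_integral_of_lipschitzOnWith_right ha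
    (hv.mono (Icc_subset_Icc (hs₀.trans hs) le_rfl)) h₁
  have hmiddle : 0 ≤ ∫ t in s₀..s₁, v t := intervalIntegral.integral_nonneg hs fun t ht =>
    hnonneg t ⟨hs₀.trans ht.1, ht.2.trans hs₁⟩
  rw [add_div]
  linarith

theorem duration_lt_outside_F_general
    (a_m v_m c p₀ v₀ t_f : ℝ) (ha : 0 < a_m)
    (hv0 : v₀ ∈ Set.Icc 0 v_m)
    (hnear : |p₀ - (-c)| < (v₀ ^ 2 + v_m ^ 2) / (2 * a_m))
    (x v : ℝ → ℝ)
    (hx : ∀ t ∈ Set.Icc (0 : ℝ) t_f, HasDerivAt x (v t) t)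
    (hLip : LipschitzOnWith (Real.toNNReal a_m) v (Set.Icc 0 t_f))
    (hvb : ∀ t ∈ Set.Icc (0 : ℝ) t_f, 0 ≤ v t ∧ v t ≤ v_m)
    (h0 : x 0 = p₀) (hv0' : v 0 = v₀) (hf : x t_f = -c) (hvf : v t_f = v_m) :
    t_f < 2 * v_m / a_m := by
  by_contra! hlong
  have hv₀m : (v₀ + v_m) / a_m ≤ 2 * v_m / a_m := by gcongr; linarith [hv0.2]
  have ht : 0 ≤ t_f := (div_nonneg (by linarith [hv0.1, hv0.2]) ha.le).trans (hv₀m.trans hlong)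
  have hdisp : ∫ t in (0 : ℝ)..t_f, v t = -c - p₀ := by
    rw [intervalIntegral.integral_eq_sub_of_hasDerivAt (by rwa [uIcc_of_le ht])
      (hLip.continuousOn.intervalIntegrable_of_Icc ht), hf, h0]
  have hbound := sq_add_sq_div_two_mul_le_integral_of_lipschitzOnWith ha ht hLip
    (fun t ht => (hvb t ht).1) (by rw [hv0', hvf, sub_zero]; exact hv₀m.trans hlong)
  rw [hv0', hvf, hdisp] at hbound
  linarith [neg_le_abs (p₀ - -c)]

/-- **Short duration for states outside `F` in the reachable set of `(−c, v_m)`.**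
Double integrator `ẍ = u`, `|u| ≤ a_m`, `ẋ ∈ [0, v_m]`.  If
`(p₀, v₀) ∈ [−L, 0] × [0, v_m]` satisfies `|p₀ − (−c)| < (v₀² + v_m²)/(2 a_m)`
(the state is in the reachable set of `(−c, v_m)` but outside `F`), then every feasible
trajectory from `(p₀, v₀)` to `(−c, v_m)` has duration strictly less than
`2 v_m / a_m`. -/
theorem duration_lt_outside_F
    (a_m v_m L c p₀ v₀ t_f : ℝ) (ha : 0 < a_m) (hv : 0 < v_m) (hc : 0 ≤ c)
    (hp : p₀ ∈ Set.Icc (-L) 0) (hv0 : v₀ ∈ Set.Icc 0 v_m)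
    (hnear : |p₀ - (-c)| < (v₀ ^ 2 + v_m ^ 2) / (2 * a_m))
    (x v : ℝ → ℝ) (ht : 0 ≤ t_f)
    (hx : ∀ t ∈ Set.Icc (0 : ℝ) t_f, HasDerivAt x (v t) t)
    (hLip : LipschitzOnWith (Real.toNNReal a_m) v (Set.Icc 0 t_f))
    (hvb : ∀ t ∈ Set.Icc (0 : ℝ) t_f, 0 ≤ v t ∧ v t ≤ v_m)
    (h0 : x 0 = p₀) (hv0' : v 0 = v₀) (hf : x t_f = -c) (hvf : v t_f = v_m) :
    t_f < 2 * v_m / a_m :=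
  duration_lt_outside_F_general a_m v_m c p₀ v₀ t_f ha hv0 hnear x v hx hLip hvb h0 hv0' hf hvf
end
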